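/- A connected graph G satisfies diam(G) ≥ 3 if and only if its complement Ḡ is connected and contains a spanning tree which is a double star. -/

import Mathlib

open SimpleGraph Finset BigOperators

namespace BUG

variable {V : Type*}

/-- Number of shortest `v`–`w` paths (walks of length `dist v w`). -/
noncomputable def sigma (G : SimpleGraph V) (v w : V) : ℕ :=
  Nat.card {p : G.Walk v w // p.length = G.dist v w}

/-- Number of shortest `v`–`w` paths containing `x` as an internal vertex. -/
noncomputable def sigmaVia (G : SimpleGraph V) (v w x : V) : ℕ :=
  Nat.card {p : G.Walk v w // p.length = G.dist v w ∧ x ∈ p.support ∧ x ≠ v ∧ x ≠ w}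

/-- Betweenness centrality of a vertex. -/
noncomputable def btw [Fintype V] [DecidableEq V] (G : SimpleGraph V) (x : V) : ℝ :=
  (1/2) * ∑ v : V, ∑ w : V,
    if v ≠ w then (sigmaVia G v w x : ℝ) / (sigma G v w : ℝ) else 0

/-- Average betweenness centrality of a graph. -/
noncomputable def avgBtw [Fintype V] [DecidableEq V] (G : SimpleGraph V) : ℝ :=
  (∑ x : V, btw G x) / (Fintype.card V)

/-- A graph is betweenness-uniform (a BUG) if all vertices have equal betweenness. -/
def IsBUG [Fintype V] [DecidableEq V] (G : SimpleGraph V) : Prop :=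
  ∀ x y : V, btw G x = btw G y

/-- Vertices close to the edge `e`: its endpoints and their neighbours. -/
def closeSet (H : SimpleGraph V) (e : Sym2 V) : Set V :=
  {v | ∃ u ∈ e, v = u ∨ H.Adj v u}

/-- Edges close to the vertex `x`. -/
def closeEdges (H : SimpleGraph V) (x : V) : Set (Sym2 V) :=
  {e ∈ H.edgeSet | x ∈ closeSet H e}

/-- Weight of an edge: `1/(n - |closeSet e|)`. -/
noncomputable def weight [Fintype V] (H : SimpleGraph V) (e : Sym2 V) : ℝ :=
  1 / ((Fintype.card V : ℝ) - (closeSet H e).ncard)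

open Classical in
/-- Co-betweenness of a vertex: total weight of the edges close to it. -/
noncomputable def coB [Fintype V] [DecidableEq V] (H : SimpleGraph V) (x : V) : ℝ :=
  ∑ e : Sym2 V, if e ∈ closeEdges H x then weight H e else 0

open Classical in
/-- Total weight of all edges of `H`. -/
noncomputable def totalWeight [Fintype V] [DecidableEq V] (H : SimpleGraph V) : ℝ :=
  ∑ e : Sym2 V, if e ∈ H.edgeSet then weight H e else 0

/-- `C` is (the vertex set of) a connected component of `B`. -/
def IsComponent (B : SimpleGraph V) (C : Set V) : Prop :=
  C.Nonempty ∧ (∀ u ∈ C, ∀ v, B.Adj u v → v ∈ C) ∧ (B.induce C).Connected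

/-- The star `K_{1,ℓ}` with center `0`. -/
def starG (ℓ : ℕ) : SimpleGraph (Fin (ℓ+1)) :=
  SimpleGraph.fromRel (fun i _ => i = 0)

/-- Disjoint union of two graphs. -/
def sumGraph {α β : Type*} (G : SimpleGraph α) (H : SimpleGraph β) :
    SimpleGraph (α ⊕ β) where
  Adj x y := Sum.LiftRel G.Adj H.Adj x y
  symm := ⟨by rintro (a|a) (b|b) h <;> cases h <;> constructor <;>
    exact SimpleGraph.Adj.symm ‹_›⟩
  loopless := ⟨by rintro (a|a) h <;> cases h <;> exact SimpleGraph.irrefl _ ‹_›⟩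

/-- Disjoint union of `k` copies of a graph `H`. -/
def copies {β : Type*} (k : ℕ) (H : SimpleGraph β) : SimpleGraph (Fin k × β) where
  Adj p q := p.1 = q.1 ∧ H.Adj p.2 q.2
  symm := ⟨by rintro ⟨a,i⟩ ⟨b,j⟩ ⟨h1,h2⟩; exact ⟨h1.symm, h2.symm⟩⟩
  loopless := ⟨by rintro ⟨a,i⟩ ⟨-,h⟩; exact SimpleGraph.irrefl _ h⟩


/-- A connected graph `G` has diameter at least 3 iff `Ḡ` is connected and
contains a spanning tree which is a double star (equivalently, a spanning double star:
an edge `ab` together with, for each other vertex, an edge to `a` or to `b`). -/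
theorem stmt3 {V : Type*} [Fintype V] (G : SimpleGraph V) (hG : G.Connected) :
    3 ≤ G.diam ↔
      (Gᶜ.Connected ∧ ∃ a b : V, Gᶜ.Adj a b ∧
        ∀ c : V, c ≠ a → c ≠ b → (Gᶜ.Adj c a ∨ Gᶜ.Adj c b)) := by
  haveI : Nonempty V := hG.nonempty
  constructor
  · intro hd
    obtain ⟨a, b, hab⟩ := G.exists_dist_eq_diam
    have hdist : 3 ≤ G.dist a b := hab ▸ hd
    have hne : a ≠ b := by
      intro h; subst h; simp [SimpleGraph.dist_self] at hdist
    have hnadj : ¬ G.Adj a b := by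
      intro h
      have := SimpleGraph.dist_eq_one_iff_adj.mpr h
      omega
    have hcab : Gᶜ.Adj a b := (G.compl_adj a b).mpr ⟨hne, hnadj⟩
    have hstar : ∀ c : V, c ≠ a → c ≠ b → (Gᶜ.Adj c a ∨ Gᶜ.Adj c b) := by
      intro c hca hcb
      by_contra hcon
      push_neg at hcon
      obtain ⟨h1, h2⟩ := hcon
      rw [G.compl_adj] at h1 h2
      push_neg at h1 h2
      have ha : G.Adj c a := h1 hca
      have hb : G.Adj c b := h2 hcb
      have := hG.dist_triangle (u := a) (v := c) (w := b)
      rw [SimpleGraph.dist_eq_one_iff_adj.mpr ha.symm,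
        SimpleGraph.dist_eq_one_iff_adj.mpr hb] at this
      omega
    refine ⟨?_, a, b, hcab, hstar⟩
    · have hreach : ∀ v : V, Gᶜ.Reachable v a := by
        intro v
        by_cases hva : v = a
        · subst hva; exact SimpleGraph.Reachable.refl v
        by_cases hvb : v = b
        · exact hvb ▸ hcab.symm.reachable
        rcases hstar v hva hvb with h | h
        · exact h.reachable
        · exact h.reachable.trans hcab.symm.reachable
      exact SimpleGraph.Connected.mk fun u v => (hreach u).trans (hreach v).symm
  · rintro ⟨-, a, b, hcab, hstar⟩
    rw [G.compl_adj] at hcab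
    obtain ⟨hne, hnadj⟩ := hcab
    have hediam : G.ediam ≠ ⊤ := by
      obtain ⟨u, v, huv⟩ := G.exists_edist_eq_ediam_of_finite
      rw [← huv, SimpleGraph.edist_ne_top_iff_reachable]
      exact hG.preconnected u v
    have hdist3 : 3 ≤ G.dist a b := by
      have hd0 : G.dist a b ≠ 0 := fun h =>
        hne ((hG.dist_eq_zero_iff).mp h)
      have hd1 : G.dist a b ≠ 1 := fun h =>
        hnadj (SimpleGraph.dist_eq_one_iff_adj.mp h)
      have hd2 : G.dist a b ≠ 2 := by
        intro h
        obtain ⟨p, hp⟩ := SimpleGraph.exists_walk_of_dist_ne_zero (by omega : G.dist a b ≠ 0)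
        rw [h] at hp
        set c := p.getVert 1 with hc_def
        have h1 : G.Adj a c := by
          have := p.adj_getVert_succ (i := 0) (by omega)
          rwa [p.getVert_zero] at this
        have h2 : G.Adj c b := by
          have hb2 : p.getVert 2 = b := by rw [← hp]; exact p.getVert_length
          have := p.adj_getVert_succ (i := 1) (by omega)
          rwa [show (1 : ℕ) + 1 = 2 from rfl, hb2] at this
        have hca : c ≠ a := h1.ne'
        have hcb : c ≠ b := h2.ne
        rcases hstar c hca hcb with hc | hc
        · exact ((G.compl_adj c a).mp hc).2 h1.symm
        · exact ((G.compl_adj c b).mp hc).2 h2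
      omega
    calc 3 ≤ G.dist a b := hdist3
      _ ≤ G.diam := SimpleGraph.dist_le_diam hediam

end BUG
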